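/- There exists an absolute constant K such that for every complex z with |z| ≤ 1 and |arg(z)| ≤ s < π/2, the imaginary part of arccos(z) satisfies |Im(arccos(z))| ≤ K √s. -/

import Mathlib

/-- The principal branch of the complex arccosine,
`arccos z = -i log (z + i (1 - z²)^(1/2))`. -/
noncomputable def carccos (z : ℂ) : ℂ :=
  -Complex.I * Complex.log (z + Complex.I * (1 - z ^ 2) ^ ((1 : ℂ) / 2))

/-! With `u` a square root of `1 - z²`, the point `w = z + i u` satisfies
`Im (arccos z) = -log ‖w‖` and `w (z - i u) = 1`. The parallelogram law then gives
`‖w‖² + ‖w‖⁻² = 2 (‖z‖² + ‖1 - z²‖) ≤ 2 + 4 ‖z‖ |Im z| ≤ 2 + 4 s`, that is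
`|sinh (log ‖w‖)| ≤ √s`, and `|x| ≤ |sinh x|` yields the bound with `K = 1`. -/

open Complex ComplexConjugate

lemma Real.abs_log_le_of_sq_add_inv_sq_le {a c : ℝ} (ha : 0 < a) (hc : 0 ≤ c)
    (h : a ^ 2 + a⁻¹ ^ 2 ≤ 2 + 4 * c ^ 2) : |Real.log a| ≤ c := by
  have hdiff : |a - a⁻¹| ≤ 2 * c := by
    refine abs_le_of_sq_le_sq ?_ (by positivity)
    have : a * a⁻¹ = 1 := mul_inv_cancel₀ ha.ne'
    linear_combination h - 2 * this
  calc |Real.log a| ≤ |Real.sinh (Real.log a)| := by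
        rw [Real.abs_sinh, Real.self_le_sinh_iff]; exact abs_nonneg _
    _ = |a - a⁻¹| / 2 := by rw [Real.sinh_log ha, abs_div, abs_two]
    _ ≤ c := by linarith

lemma Complex.sq_cpow_one_half (w : ℂ) : (w ^ ((1 : ℂ) / 2)) ^ 2 = w := by
  rw [one_div]; exact cpow_ofNat_inv_pow w 2

lemma Complex.abs_im_le_norm_mul_abs_arg (z : ℂ) : |z.im| ≤ ‖z‖ * |arg z| := by
  rw [← norm_mul_sin_arg, abs_mul, abs_norm]
  exact mul_le_mul_of_nonneg_left Real.abs_sin_le_abs (norm_nonneg z)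

lemma Complex.norm_one_sub_sq_le (z : ℂ) : ‖1 - z ^ 2‖ ≤ |1 - ‖z‖ ^ 2| + 2 * ‖z‖ * |z.im| := by
  have hsplit : 1 - z ^ 2 = ((1 - ‖z‖ ^ 2 : ℝ) : ℂ) - z * (z - conj z) := by
    rw [mul_sub, mul_conj, normSq_eq_norm_sq]; push_cast; ring
  calc ‖1 - z ^ 2‖ ≤ ‖((1 - ‖z‖ ^ 2 : ℝ) : ℂ)‖ + ‖z * (z - conj z)‖ := hsplit ▸ norm_sub_le _ _
    _ = |1 - ‖z‖ ^ 2| + 2 * ‖z‖ * |z.im| := by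
      rw [norm_real, Real.norm_eq_abs, norm_mul, sub_conj, norm_mul, norm_I, norm_real,
        Real.norm_eq_abs, abs_mul, abs_two]
      ring

lemma carccos_im (z : ℂ) :
    (carccos z).im = -Real.log ‖z + I * (1 - z ^ 2) ^ ((1 : ℂ) / 2)‖ := by
  simp [carccos, log_re]

lemma Complex.add_I_mul_mul_sub_I_mul_eq_one {z u : ℂ} (hu : u ^ 2 = 1 - z ^ 2) :
    (z + I * u) * (z - I * u) = 1 := by
  linear_combination hu - u ^ 2 * I_sq

lemma Complex.sq_norm_add_I_mul_add_inv_sq {z u : ℂ} (hu : u ^ 2 = 1 - z ^ 2) :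
    ‖z + I * u‖ ^ 2 + ‖z + I * u‖⁻¹ ^ 2 = 2 * (‖z‖ ^ 2 + ‖1 - z ^ 2‖) := by
  have hinv : ‖z - I * u‖ = ‖z + I * u‖⁻¹ := by
    refine eq_inv_of_mul_eq_one_left ?_
    rw [← norm_mul, mul_comm, add_I_mul_mul_sub_I_mul_eq_one hu, norm_one]
  rw [← hinv, parallelogram_law_with_norm ℝ, norm_mul, norm_I, one_mul, ← hu, norm_pow]

theorem im_arccos_bound :
    ∃ K > (0 : ℝ), ∀ s : ℝ, ∀ z : ℂ,
      ‖z‖ ≤ 1 → |Complex.arg z| ≤ s → s < Real.pi / 2 →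
      |(carccos z).im| ≤ K * Real.sqrt s := by
  refine ⟨1, one_pos, fun s z hz harg _ => ?_⟩
  set u := (1 - z ^ 2) ^ ((1 : ℂ) / 2)
  have hu : u ^ 2 = 1 - z ^ 2 := sq_cpow_one_half _
  have hw : z + I * u ≠ 0 := left_ne_zero_of_mul_eq_one (add_I_mul_mul_sub_I_mul_eq_one hu)
  have hs : 0 ≤ s := (abs_nonneg _).trans harg
  have him : ‖z‖ * |z.im| ≤ s := calc
    ‖z‖ * |z.im| ≤ 1 * (1 * s) := by
      gcongr
      exact (abs_im_le_norm_mul_abs_arg z).trans (by gcongr)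
    _ = s := by ring
  rw [carccos_im, abs_neg, one_mul]
  refine Real.abs_log_le_of_sq_add_inv_sq_le (norm_pos_iff.2 hw) (Real.sqrt_nonneg s) ?_
  calc ‖z + I * u‖ ^ 2 + ‖z + I * u‖⁻¹ ^ 2 = 2 * (‖z‖ ^ 2 + ‖1 - z ^ 2‖) :=
        sq_norm_add_I_mul_add_inv_sq hu
    _ ≤ 2 * (‖z‖ ^ 2 + (|1 - ‖z‖ ^ 2| + 2 * ‖z‖ * |z.im|)) := by
        gcongr; exact norm_one_sub_sq_le z
    _ ≤ 2 + 4 * √s ^ 2 := by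
        rw [Real.sq_sqrt hs, abs_of_nonneg (by nlinarith [norm_nonneg z])]
        linarith
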